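/- Let M be an n×n irreducible matrix with nonnegative integer entries whose Perron–Frobenius eigenvalue equals 1. Then M is a permutation matrix. -/

import Mathlib

/-!
Since the spectral radius is `1`, every eigenvalue of `M ^ k` has modulus at most `1`, so
`trace (M ^ k) ≤ n` and the diagonal entries of all powers of `M` are bounded. If some row `i`
had sum at least `2`, irreducibility would give a length `T` such that every `j` with `M i j ≠ 0`
reaches `i` in exactly `T` steps; then `(M ^ (T + 1)) i i ≥ 2` and the entries
`(M ^ ((T + 1) * m)) i i ≥ 2 ^ m` are unbounded. Hence all row sums are at most `1`, and since
irreducibility also makes every column nonzero, `M` is a permutation matrix.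
-/

open Finset Matrix

theorem spectrum.norm_le_one_of_mem_pow {A : Type*} [Ring A] [Algebra ℂ A] {a : A}
    (ha : spectralRadius ℂ a ≤ 1) {k : ℕ} (hk : 0 < k) {z : ℂ} (hz : z ∈ spectrum ℂ (a ^ k)) :
    ‖z‖ ≤ 1 := by
  rw [spectrum.map_pow_of_pos a hk] at hz
  obtain ⟨w, hw, rfl⟩ := hz
  have hw1 : ‖w‖ ≤ 1 := by
    have : (‖w‖₊ : ENNReal) ≤ 1 := (le_iSup₂ (α := ENNReal) w hw).trans ha
    exact_mod_cast this
  simpa using pow_le_one₀ (norm_nonneg w) hw1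

namespace Matrix

variable {n : Type*} [Fintype n] [DecidableEq n]

theorem norm_trace_le_card_mul (A : Matrix n n ℂ) {r : ℝ}
    (h : ∀ z ∈ spectrum ℂ A, ‖z‖ ≤ r) : ‖A.trace‖ ≤ Fintype.card n * r := by
  have hroots : ∀ x ∈ A.charpoly.roots.map norm, x ≤ r := by
    simp only [Multiset.mem_map, forall_exists_index, and_imp, forall_apply_eq_imp_iff₂]
    exact fun z hz => h z (mem_spectrum_of_isRoot_charpoly (Polynomial.isRoot_of_mem_roots hz))
  have hcard : Multiset.card A.charpoly.roots = Fintype.card n := by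
    rw [Polynomial.splits_iff_card_roots.mp (IsAlgClosed.splits _), charpoly_natDegree_eq_dim]
  calc ‖A.trace‖ = ‖A.charpoly.roots.sum‖ := by rw [trace_eq_sum_roots_charpoly]
    _ ≤ (A.charpoly.roots.map norm).sum := norm_multiset_sum_le _
    _ ≤ Multiset.card (A.charpoly.roots.map norm) • r := Multiset.sum_le_card_nsmul _ _ hroots
    _ = Fintype.card n * r := by rw [Multiset.card_map, hcard, nsmul_eq_mul]

variable (M : Matrix n n ℕ)

theorem trace_pow_le_card (hM : spectralRadius ℂ (M.map (Nat.cast : ℕ → ℂ)) ≤ 1) (k : ℕ) :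
    (M ^ k).trace ≤ Fintype.card n := by
  rcases Nat.eq_zero_or_pos k with rfl | hk
  · simp
  have hcast : (((M ^ k).trace : ℕ) : ℂ) = (M.map (Nat.cast : ℕ → ℂ) ^ k).trace := by
    rw [show M.map (Nat.cast : ℕ → ℂ) = M.map (Nat.castRingHom ℂ) from rfl, ← Matrix.map_pow]
    exact AddMonoidHom.map_trace (Nat.castRingHom ℂ) (M ^ k)
  have hnorm := norm_trace_le_card_mul _ fun z hz => spectrum.norm_le_one_of_mem_pow hM hk hz
  rw [← hcast, Complex.norm_natCast, mul_one] at hnorm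
  exact_mod_cast hnorm

theorem pow_apply_self_le_trace (k : ℕ) (i : n) : (M ^ k) i i ≤ (M ^ k).trace :=
  single_le_sum (f := fun i => (M ^ k) i i) (fun _ _ => Nat.zero_le _) (mem_univ i)

theorem pow_apply_mul_pow_apply_le_pow_add_apply (a b : ℕ) (i l j : n) :
    (M ^ a) i l * (M ^ b) l j ≤ (M ^ (a + b)) i j := by
  rw [pow_add, mul_apply]
  exact single_le_sum (f := fun l => (M ^ a) i l * (M ^ b) l j)
    (fun _ _ => Nat.zero_le _) (mem_univ l)

theorem pow_add_apply_pos {a b : ℕ} {i l j : n} (hil : 0 < (M ^ a) i l) (hlj : 0 < (M ^ b) l j) :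
    0 < (M ^ (a + b)) i j :=
  (Nat.mul_pos hil hlj).trans_le (pow_apply_mul_pow_apply_le_pow_add_apply M a b i l j)

theorem pow_apply_self_pow_le (L m : ℕ) (i : n) : (M ^ L) i i ^ m ≤ (M ^ (L * m)) i i := by
  induction m with
  | zero => simp
  | succ m ih =>
    calc (M ^ L) i i ^ (m + 1) = (M ^ L) i i ^ m * (M ^ L) i i := pow_succ _ _
      _ ≤ (M ^ (L * m)) i i * (M ^ L) i i := Nat.mul_le_mul_right _ ih
      _ ≤ (M ^ (L * (m + 1))) i i := pow_apply_mul_pow_apply_le_pow_add_apply M _ _ i i i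

theorem exists_apply_ne_zero_of_pow_apply_pos {k : ℕ} (hk : 0 < k) {i j : n}
    (h : 0 < (M ^ k) i j) : ∃ l, M l j ≠ 0 := by
  obtain ⟨m, rfl⟩ := Nat.exists_eq_add_of_lt hk
  rw [zero_add, pow_succ, mul_apply] at h
  obtain ⟨l, -, hl⟩ := exists_ne_zero_of_sum_ne_zero h.ne'
  exact ⟨l, right_ne_zero_of_mul hl⟩

theorem exists_sum_row_le_pow_succ_apply_self {i : n} (hreach : ∀ j, ∃ k, 0 < (M ^ k) j i) :
    ∃ T, ∑ j, M i j ≤ (M ^ (T + 1)) i i := by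
  choose k hk using hreach
  set S := univ.filter fun j => M i j ≠ 0
  have hloop : ∀ j ∈ S, 0 < (M ^ (1 + k j)) i i := fun j hj =>
    pow_add_apply_pos M (by simpa [S, Nat.pos_iff_ne_zero] using hj) (hk j)
  -- walk `j → i` in `k j` steps, then once around each loop `i → l → i` with `l ∈ S`, `l ≠ j`
  refine ⟨∑ j ∈ S, (1 + k j) - 1, ?_⟩
  have hT : ∀ j ∈ S, 0 < (M ^ (∑ j ∈ S, (1 + k j) - 1)) j i := by
    intro j hj
    have hsplit := add_sum_erase S (fun l => 1 + k l) hj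
    have hrest : 0 < (M ^ ∑ l ∈ S.erase j, (1 + k l)) i i :=
      sum_induction _ (fun a => 0 < (M ^ a) i i) (fun _ _ => pow_add_apply_pos M)
        (by simp) fun l hl => hloop l (mem_of_mem_erase hl)
    rw [show ∑ j ∈ S, (1 + k j) - 1 = k j + ∑ l ∈ S.erase j, (1 + k l) by omega]
    exact pow_add_apply_pos M (hk j) hrest
  rw [pow_succ', mul_apply]
  refine sum_le_sum fun j _ => ?_
  by_cases hj : M i j = 0
  · simp [hj]
  · exact Nat.le_mul_of_pos_right _ (hT j (by simpa [S] using hj))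

theorem sum_row_le_one_of_pow_apply_self_le {i : n} (hreach : ∀ j, ∃ k, 0 < (M ^ k) j i)
    {C : ℕ} (hC : ∀ k, (M ^ k) i i ≤ C) : ∑ j, M i j ≤ 1 := by
  obtain ⟨T, hT⟩ := exists_sum_row_le_pow_succ_apply_self M hreach
  by_contra! h
  have := calc 2 ^ C ≤ (∑ j, M i j) ^ C := Nat.pow_le_pow_left h C
    _ ≤ (M ^ (T + 1)) i i ^ C := Nat.pow_le_pow_left hT C
    _ ≤ (M ^ ((T + 1) * C)) i i := pow_apply_self_pow_le M _ C i
    _ ≤ C := hC _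
  exact (Nat.lt_two_pow_self).not_ge this

theorem exists_perm_of_sum_row_le_one (hrow : ∀ i, ∑ j, M i j ≤ 1)
    (hcol : ∀ j, ∃ i, M i j ≠ 0) :
    ∃ σ : Equiv.Perm n, ∀ i j, M i j = if σ i = j then 1 else 0 := by
  have hle : ∀ i j, M i j ≤ 1 := fun i j =>
    (single_le_sum (f := fun j => M i j) (fun _ _ => Nat.zero_le _) (mem_univ j)).trans (hrow i)
  have hunique : ∀ {i j j'}, M i j ≠ 0 → M i j' ≠ 0 → j = j' := by
    intro i j j' h h'
    by_contra hne
    have := ((sum_pair hne).symm.le.trans (sum_le_sum_of_subset (subset_univ _))).trans (hrow i)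
    omega
  choose g hg using hcol
  have hg_inj : Function.Injective g := fun j j' hjj' => hunique (hg j) (hjj' ▸ hg j')
  set σ := (Equiv.ofBijective g hg_inj.bijective_of_finite).symm
  have hσ : ∀ i, M i (σ i) ≠ 0 := fun i => by
    have hgσ : g (σ i) = i := (Equiv.ofBijective g hg_inj.bijective_of_finite).apply_symm_apply i
    simpa only [hgσ] using hg (σ i)
  refine ⟨σ, fun i j => ?_⟩
  split_ifs with h
  · subst h
    exact le_antisymm (hle i _) (Nat.one_le_iff_ne_zero.mpr (hσ i))
  · by_contra h'
    exact h (hunique (hσ i) h')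

end Matrix

theorem pf_eigenvalue_one_perm_general (n : ℕ) (M : Matrix (Fin n) (Fin n) ℕ)
    (hirr : ∀ i j : Fin n, ∃ k : ℕ, 1 ≤ k ∧ 0 < (M ^ k) i j)
    (hpf : spectralRadius ℂ (M.map (Nat.cast : ℕ → ℂ)) = 1) :
    ∃ σ : Equiv.Perm (Fin n), ∀ i j : Fin n, M i j = if σ i = j then 1 else 0 := by
  have hdiag : ∀ k i, (M ^ k) i i ≤ Fintype.card (Fin n) := fun k i =>
    (M.pow_apply_self_le_trace k i).trans (M.trace_pow_le_card hpf.le k)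
  refine M.exists_perm_of_sum_row_le_one (fun i => ?_) (fun j => ?_)
  · refine M.sum_row_le_one_of_pow_apply_self_le (fun j => ?_) (hdiag · i)
    obtain ⟨k, -, hk⟩ := hirr j i
    exact ⟨k, hk⟩
  · obtain ⟨k, hk, hjj⟩ := hirr j j
    exact M.exists_apply_ne_zero_of_pow_apply_pos hk hjj

/-- An irreducible nonnegative integer matrix whose Perron–Frobenius eigenvalue
(spectral radius) equals `1` is a permutation matrix. -/
theorem pf_eigenvalue_one_perm (n : ℕ) (hn : 0 < n) (M : Matrix (Fin n) (Fin n) ℕ)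
    (hirr : ∀ i j : Fin n, ∃ k : ℕ, 1 ≤ k ∧ 0 < (M ^ k) i j)
    (hpf : spectralRadius ℂ (M.map (Nat.cast : ℕ → ℂ)) = 1) :
    ∃ σ : Equiv.Perm (Fin n), ∀ i j : Fin n, M i j = if σ i = j then 1 else 0 :=
  pf_eigenvalue_one_perm_general n M hirr hpf
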